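/- arXiv:nlin/0302007 — 2 statements merged into one kernel-verified Lean document; each statement's English description precedes it below -/
import Mathlib

section
/- Suppose ψ_α, φ_α satisfy the KL system with φ_α nowhere zero, and set ξ_α = ψ_α/φ̄_α. Then the ratio identity ∂ξ_α / ∂̄ξ̄_α = φ_α² / φ̄_α² holds wherever ∂̄ξ̄_α ≠ 0. -/
open Complex ComplexConjugate

noncomputable def wd (f : ℂ → ℂ) (z : ℂ) : ℂ :=
  (fderiv ℝ f z 1 - Complex.I * fderiv ℝ f z Complex.I) / 2

noncomputable def wdb (f : ℂ → ℂ) (z : ℂ) : ℂ :=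
  (fderiv ℝ f z 1 + Complex.I * fderiv ℝ f z Complex.I) / 2

noncomputable def lnC (a : ℂ → ℝ) (z : ℂ) : ℂ := (Real.log (a z) : ℂ)

lemma fderiv_div_apply' (f g : ℂ → ℂ) (z v : ℂ) (hf : DifferentiableAt ℝ f z)
    (hg : DifferentiableAt ℝ g z) (hgz : g z ≠ 0) :
    fderiv ℝ (fun w => f w / g w) z v
      = (fderiv ℝ f z v * g z - f z * fderiv ℝ g z v) / (g z)^2 := by
  have hinv : HasFDerivAt (fun w => (g w)⁻¹)
      ((-ContinuousLinearMap.mulLeftRight ℝ ℂ (g z)⁻¹ (g z)⁻¹).comp (fderiv ℝ g z)) z := by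
    have h1 := (hasFDerivAt_ringInverse (𝕜 := ℝ) (Units.mk0 (g z) hgz)).comp z hg.hasFDerivAt
    simpa [Ring.inverse_eq_inv', Function.comp_def] using h1
  have hmul := hf.hasFDerivAt.mul' hinv
  have := hmul.fderiv
  have h2 : fderiv ℝ (fun w => f w / g w) z v =
      (f z • ((-ContinuousLinearMap.mulLeftRight ℝ ℂ (g z)⁻¹ (g z)⁻¹).comp (fderiv ℝ g z)) +
        (ContinuousLinearMap.smulRight (fderiv ℝ f z) (g z)⁻¹)) v := by
    have heq : (fun w => f w / g w) = fun y => f y * (g y)⁻¹ := funext fun w => div_eq_mul_inv _ _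
    rw [heq, show (fun y => f y * (g y)⁻¹) = (f * fun w => (g w)⁻¹) from rfl, this]
    simp only [ContinuousLinearMap.add_apply, ContinuousLinearMap.smulRight_apply,
      ContinuousLinearMap.smul_apply, MulOpposite.smul_eq_mul_unop, smul_eq_mul]
    rfl
  rw [h2]
  simp only [ContinuousLinearMap.add_apply, ContinuousLinearMap.coe_smul', Pi.smul_apply,
    ContinuousLinearMap.comp_apply, ContinuousLinearMap.neg_apply,
    ContinuousLinearMap.mulLeftRight_apply, ContinuousLinearMap.smulRight_apply,
    ContinuousLinearMap.one_apply, smul_eq_mul]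
  field_simp
  ring

lemma wd_div (f g : ℂ → ℂ) (z : ℂ) (hf : DifferentiableAt ℝ f z)
    (hg : DifferentiableAt ℝ g z) (hgz : g z ≠ 0) :
    wd (fun w => f w / g w) z = (wd f z * g z - f z * wd g z) / (g z)^2 := by
  unfold wd
  rw [fderiv_div_apply' f g z 1 hf hg hgz, fderiv_div_apply' f g z Complex.I hf hg hgz]
  have h2 : (g z)^2 ≠ 0 := pow_ne_zero _ hgz
  field_simp
  ring

lemma wdb_div (f g : ℂ → ℂ) (z : ℂ) (hf : DifferentiableAt ℝ f z)
    (hg : DifferentiableAt ℝ g z) (hgz : g z ≠ 0) :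
    wdb (fun w => f w / g w) z = (wdb f z * g z - f z * wdb g z) / (g z)^2 := by
  unfold wdb
  rw [fderiv_div_apply' f g z 1 hf hg hgz, fderiv_div_apply' f g z Complex.I hf hg hgz]
  have h2 : (g z)^2 ≠ 0 := pow_ne_zero _ hgz
  field_simp
  ring

theorem stmt4 (ψ φ : Fin 2 → ℂ → ℂ) (p : ℂ → ℝ)
    (hψ : ∀ α, ContDiff ℝ (⊤ : ℕ∞) (ψ α)) (hφ : ∀ α, ContDiff ℝ (⊤ : ℕ∞) (φ α))
    (hp : ∀ z, p z = Real.sqrt ((‖ψ 0 z‖ ^ 2 + ‖φ 0 z‖ ^ 2) * (‖ψ 1 z‖ ^ 2 + ‖φ 1 z‖ ^ 2)))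
    (hKL1 : ∀ α z, wd (ψ α) z = (p z : ℂ) * φ α z)
    (hKL2 : ∀ α z, wdb (φ α) z = -(p z : ℂ) * ψ α z)
    (hKL3 : ∀ α z, wdb (fun w => conj (ψ α w)) z = (p z : ℂ) * conj (φ α z))
    (hKL4 : ∀ α z, wd (fun w => conj (φ α w)) z = -(p z : ℂ) * conj (ψ α z))
    (hφ0 : ∀ α z, φ α z ≠ 0) :
    ∀ α z, wdb (fun w => conj (ψ α w / conj (φ α w))) z ≠ 0 →
      wd (fun w => ψ α w / conj (φ α w)) z / wdb (fun w => conj (ψ α w / conj (φ α w))) z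
        = (φ α z) ^ 2 / (conj (φ α z)) ^ 2 := by
  intro α z hne
  have hψd : DifferentiableAt ℝ (ψ α) z := ((hψ α).differentiable (by simp)).differentiableAt
  have hφd : DifferentiableAt ℝ (φ α) z := ((hφ α).differentiable (by simp)).differentiableAt
  have hψc : DifferentiableAt ℝ (fun w => conj (ψ α w)) z := hψd.star
  have hφc : DifferentiableAt ℝ (fun w => conj (φ α w)) z := hφd.star
  have hb : φ α z ≠ 0 := hφ0 α z
  have hcb : conj (φ α z) ≠ 0 := by simpa using hb
  -- rewrite the conjugated quotient
  have hfun : (fun w => conj (ψ α w / conj (φ α w))) = fun w => conj (ψ α w) / φ α w := by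
    funext w; rw [map_div₀, Complex.conj_conj]
  rw [hfun] at hne ⊢
  have h1 := wd_div (ψ α) (fun w => conj (φ α w)) z hψd hφc hcb
  have h2 := wdb_div (fun w => conj (ψ α w)) (φ α) z hψc hφd hb
  beta_reduce at h1 h2
  rw [h2] at hne
  rw [h1, h2]
  rw [hKL3 α z, hKL2 α z] at hne
  rw [hKL1, hKL2, hKL3, hKL4]
  set P := (p z : ℂ)
  set a := ψ α z
  set b := φ α z
  have hN : P * conj b * b - conj a * (-P * a) ≠ 0 := by
    intro h
    apply hne
    rw [h, zero_div]
  rw [div_div_div_eq, div_eq_div_iff (mul_ne_zero (pow_ne_zero 2 hcb) hN) (pow_ne_zero 2 hcb)]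
  ring
end

section
/- Let ξ : ℂ → ℂ be smooth with |ξ(z)|² = 1 for all z, let a : ℂ → ℝ be positive smooth, and suppose ξ satisfies ∂̄∂ξ + (∂ξ)(∂̄ξ̄)ξ + 2(∂̄ ln a)(∂ξ) = 0. Then the pointwise reciprocal 1/ξ also satisfies the same equation: ∂̄∂(ξ⁻¹) + (∂(ξ⁻¹))(∂̄(ξ̄⁻¹))ξ⁻¹ + 2(∂̄ ln a)(∂(ξ⁻¹)) = 0. -/
open Complex ComplexConjugate

lemma wd_mul {f g : ℂ → ℂ} {z : ℂ} (hf : DifferentiableAt ℝ f z)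
    (hg : DifferentiableAt ℝ g z) :
    wd (fun w => f w * g w) z = f z * wd g z + g z * wd f z := by
  unfold wd
  rw [fderiv_fun_mul hf hg]
  simp only [ContinuousLinearMap.add_apply, ContinuousLinearMap.smul_apply, smul_eq_mul]
  ring

lemma wdb_mul {f g : ℂ → ℂ} {z : ℂ} (hf : DifferentiableAt ℝ f z)
    (hg : DifferentiableAt ℝ g z) :
    wdb (fun w => f w * g w) z = f z * wdb g z + g z * wdb f z := by
  unfold wdb
  rw [fderiv_fun_mul hf hg]
  simp only [ContinuousLinearMap.add_apply, ContinuousLinearMap.smul_apply, smul_eq_mul]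
  ring

lemma fderiv_conj_comp (f : ℂ → ℂ) (z : ℂ) (v : ℂ) :
    fderiv ℝ (fun w => conj (f w)) z v = conj (fderiv ℝ f z v) := by
  have : (fun w => conj (f w)) = (⇑Complex.conjCLE ∘ f) := by
    funext w; simp [Complex.conjCLE_apply]
  rw [this, Complex.conjCLE.comp_fderiv]
  simp [Complex.conjCLE_apply]

lemma wd_conj (f : ℂ → ℂ) (z : ℂ) :
    wd (fun w => conj (f w)) z = conj (wdb f z) := by
  unfold wd wdb
  rw [fderiv_conj_comp, fderiv_conj_comp]
  simp only [map_div₀, map_add, map_mul, Complex.conj_I, map_ofNat]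
  ring

lemma wdb_conj (f : ℂ → ℂ) (z : ℂ) :
    wdb (fun w => conj (f w)) z = conj (wd f z) := by
  unfold wd wdb
  rw [fderiv_conj_comp, fderiv_conj_comp]
  simp only [map_div₀, map_sub, map_mul, Complex.conj_I, map_ofNat]
  ring

lemma wd_const (c : ℂ) (z : ℂ) : wd (fun _ => c) z = 0 := by
  unfold wd; simp

lemma contDiff_wd {f : ℂ → ℂ} (hf : ContDiff ℝ (⊤ : ℕ∞) f) : ContDiff ℝ (⊤ : ℕ∞) (wd f) := by
  have h : ContDiff ℝ (⊤ : ℕ∞) (fun z => fderiv ℝ f z) := hf.fderiv_right le_rfl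
  have h1 : ContDiff ℝ (⊤ : ℕ∞) (fun z => fderiv ℝ f z 1) :=
    (ContinuousLinearMap.apply ℝ ℂ (1:ℂ)).contDiff.comp h
  have hI : ContDiff ℝ (⊤ : ℕ∞) (fun z => fderiv ℝ f z Complex.I) :=
    (ContinuousLinearMap.apply ℝ ℂ (Complex.I)).contDiff.comp h
  exact ((h1.sub (contDiff_const.mul hI)).div_const 2)

lemma contDiff_wdb {f : ℂ → ℂ} (hf : ContDiff ℝ (⊤ : ℕ∞) f) : ContDiff ℝ (⊤ : ℕ∞) (wdb f) := by
  have h : ContDiff ℝ (⊤ : ℕ∞) (fun z => fderiv ℝ f z) := hf.fderiv_right le_rfl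
  have h1 : ContDiff ℝ (⊤ : ℕ∞) (fun z => fderiv ℝ f z 1) :=
    (ContinuousLinearMap.apply ℝ ℂ (1:ℂ)).contDiff.comp h
  have hI : ContDiff ℝ (⊤ : ℕ∞) (fun z => fderiv ℝ f z Complex.I) :=
    (ContinuousLinearMap.apply ℝ ℂ (Complex.I)).contDiff.comp h
  exact ((h1.add (contDiff_const.mul hI)).div_const 2)

theorem stmt7 (ξ : ℂ → ℂ) (a : ℂ → ℝ)
    (hξ : ContDiff ℝ (⊤ : ℕ∞) ξ) (hmod : ∀ z, ξ z * conj (ξ z) = 1)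
    (ha : ContDiff ℝ (⊤ : ℕ∞) a) (hapos : ∀ z, 0 < a z)
    (heq : ∀ z, wdb (wd ξ) z + wd ξ z * wdb (fun w => conj (ξ w)) z * ξ z
        + 2 * wdb (lnC a) z * wd ξ z = 0) :
    ∀ z, wdb (wd (fun w => (ξ w)⁻¹)) z
        + wd (fun w => (ξ w)⁻¹) z * wdb (fun w => conj ((ξ w)⁻¹)) z * (ξ z)⁻¹
        + 2 * wdb (lnC a) z * wd (fun w => (ξ w)⁻¹) z = 0 := by
  intro z
  have hne : ∀ w, ξ w ≠ 0 := by
    intro w h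
    have := hmod w
    rw [h] at this
    simp at this
  have hinv : ∀ w, (ξ w)⁻¹ = conj (ξ w) := by
    intro w
    exact (eq_inv_of_mul_eq_one_right (hmod w)).symm
  have hfun : (fun w => (ξ w)⁻¹) = (fun w => conj (ξ w)) := funext hinv
  have hfun2 : (fun w => conj ((ξ w)⁻¹)) = ξ := by
    funext w
    rw [hinv w, Complex.conj_conj]
  rw [hfun, hfun2, hinv z]
  have hcξ : ContDiff ℝ (⊤ : ℕ∞) (fun w => conj (ξ w)) := by
    have : (fun w => conj (ξ w)) = (⇑Complex.conjCLE ∘ ξ) := by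
      funext w; simp [Complex.conjCLE_apply]
    rw [this]
    exact Complex.conjCLE.contDiff.comp hξ
  have hdξ : ∀ w, DifferentiableAt ℝ ξ w := fun w => hξ.differentiable (by simp) w
  have hdcξ : ∀ w, DifferentiableAt ℝ (fun w => conj (ξ w)) w :=
    fun w => hcξ.differentiable (by simp) w
  -- key identity: wd (conj ξ) = -(conj ξ)^2 * wd ξ
  have key : wd (fun w => conj (ξ w)) = fun w => -(conj (ξ w))^2 * wd ξ w := by
    funext w
    have h0 : wd (fun x => ξ x * conj (ξ x)) w = 0 := by
      have : (fun x => ξ x * conj (ξ x)) = fun _ => (1:ℂ) := funext hmod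
      rw [this, wd_const]
    rw [wd_mul (hdξ w) (hdcξ w)] at h0
    have hm := hmod w
    have hv : conj (ξ w) ≠ 0 := by
      intro h; rw [h] at hm; simp at hm
    linear_combination conj (ξ w) * h0 - wd (fun w => conj (ξ w)) w * hm
  rw [key]
  -- differentiability facts
  have hwdξ : ContDiff ℝ (⊤ : ℕ∞) (wd ξ) := contDiff_wd hξ
  have hv2 : DifferentiableAt ℝ (fun w => -(conj (ξ w))^2) z := by
    have : ContDiff ℝ (⊤ : ℕ∞) (fun w => -(conj (ξ w))^2) := (hcξ.pow 2).neg
    exact this.differentiable (by simp) z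
  rw [wdb_mul hv2 (hwdξ.differentiable (by simp) z)]
  -- wdb of -(conj ξ)^2
  have hsq : wdb (fun w => -(conj (ξ w))^2) z
      = -(2 * conj (ξ z) * conj (wd ξ z)) := by
    have e1 : (fun w => -(conj (ξ w))^2) = (fun w => (-conj (ξ w)) * conj (ξ w)) := by
      funext w; ring
    rw [e1, wdb_mul (hdcξ z).fun_neg (hdcξ z)]
    have e2 : wdb (fun w => -conj (ξ w)) z = -(wdb (fun w => conj (ξ w)) z) := by
      unfold wdb
      rw [show (fun w => -conj (ξ w)) = (fun w => -((fun w => conj (ξ w)) w)) from rfl,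
        fderiv_fun_neg]
      simp
      ring
    rw [e2, wdb_conj]
    ring
  rw [hsq]
  beta_reduce
  -- relation: wdb ξ z = -(ξ z)^2 * conj (wd ξ z)
  have hB : wdb ξ z = -(ξ z)^2 * conj (wd ξ z) := by
    have h2 := congrArg (starRingEnd ℂ) (wd_conj ξ z)
    rw [Complex.conj_conj] at h2
    rw [← h2, congrFun key z]
    simp only [map_mul, map_neg, map_pow, Complex.conj_conj]
  rw [hB]
  have hE := heq z
  rw [wdb_conj] at hE
  have hm := hmod z
  linear_combination (-(conj (ξ z))^2) * hE + (conj (ξ z) * conj (wd ξ z) * wd ξ z * (ξ z * conj (ξ z) + 2)) * hm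
end
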